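/- arXiv:1409.2742 — 6 statements merged into one kernel-verified Lean document; each statement's English description precedes it below -/
import Mathlib

section
/- If n = 2k is even, then there exist k matrices in S_n ∩ ℤ^{n×n} with pairwise disjoint supports whose sum is the all-ones matrix. -/
namespace AllOnesDecomp

variable {k : ℕ}

/-- the "distance class" of an element of `ZMod (2k)`. -/
def gg (k : ℕ) (d : ZMod (2 * k)) : ℕ := min d.val (-d).val

lemma gg_le (hk : 0 < k) (d : ZMod (2 * k)) : gg k d ≤ k := by
  haveI : NeZero (2 * k) := ⟨by omega⟩
  rcases eq_or_ne d 0 with h | h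
  · simp [gg, h]
  · have h1 : (-d).val = 2 * k - d.val := by rw [ZMod.neg_val]; simp [h]
    have h2 : d.val < 2 * k := ZMod.val_lt d
    unfold gg
    omega

lemma gg_neg (d : ZMod (2 * k)) : gg k (-d) = gg k d := by
  simp [gg, min_comm]

def Fidx (hk : 0 < k) (d : ZMod (2 * k)) : Fin k :=
  ⟨if gg k d = 0 ∨ gg k d = k then k - 1 else gg k d - 1, by
    have := gg_le hk d; split <;> omega⟩

lemma Fidx_neg (hk : 0 < k) (d : ZMod (2 * k)) : Fidx hk (-d) = Fidx hk d := by
  simp [Fidx, gg_neg]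

def aa (k : ℕ) (i : Fin k) : ZMod (2 * k) :=
  if i.val = k - 1 then 0 else ((i.val + 1 : ℕ) : ZMod (2 * k))

def bb (k : ℕ) (i : Fin k) : ZMod (2 * k) :=
  if i.val = k - 1 then ((k : ℕ) : ZMod (2 * k)) else ((2 * k - (i.val + 1) : ℕ) : ZMod (2 * k))

lemma mem_fiber (hk : 0 < k) (d : ZMod (2 * k)) (i : Fin k) :
    Fidx hk d = i ↔ d = aa k i ∨ d = bb k i := by
  haveI : NeZero (2 * k) := ⟨by omega⟩
  have hcast : ∀ m : ℕ, m < 2 * k → (d = (m : ZMod (2 * k)) ↔ d.val = m) := by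
    intro m hm
    constructor
    · intro h; rw [h, ZMod.val_cast_of_lt hm]
    · intro h; apply ZMod.val_injective; rw [ZMod.val_cast_of_lt hm]; exact h
  have hi : i.val < k := i.isLt
  have hvlt : d.val < 2 * k := ZMod.val_lt d
  have hc : gg k d = d.val ∨ gg k d = (-d).val := min_choice _ _
  have hl : gg k d ≤ d.val := min_le_left _ _
  have hr : gg k d ≤ (-d).val := min_le_right _ _
  have hgg : (d.val = 0 ∧ (-d).val = 0) ∨ ((-d).val = 2 * k - d.val ∧ d.val ≠ 0) := by
    rcases eq_or_ne d 0 with rfl | h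
    · left; simp
    · right
      refine ⟨by rw [ZMod.neg_val]; simp [h], ?_⟩
      intro h0; exact h ((ZMod.val_eq_zero d).mp h0)
  have e0 : d = 0 ↔ d.val = 0 := (ZMod.val_eq_zero d).symm
  have ek : d = ((k : ℕ) : ZMod (2 * k)) ↔ d.val = k := hcast k (by omega)
  have e1 : d = ((i.val + 1 : ℕ) : ZMod (2 * k)) ↔ d.val = i.val + 1 := hcast _ (by omega)
  have e2 : d = ((2 * k - (i.val + 1) : ℕ) : ZMod (2 * k)) ↔ d.val = 2 * k - (i.val + 1) :=
    hcast _ (by omega)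
  have hFv : (Fidx hk d).val = if gg k d = 0 ∨ gg k d = k then k - 1 else gg k d - 1 := rfl
  rw [Fin.ext_iff, hFv]
  unfold aa bb
  by_cases h1 : i.val = k - 1 <;> [rw [if_pos h1, if_pos h1, e0, ek]; rw [if_neg h1, if_neg h1, e1, e2]] <;>
    split_ifs with h2 <;> omega

lemma aa_ne_bb (hk : 0 < k) (i : Fin k) : aa k i ≠ bb k i := by
  haveI : NeZero (2 * k) := ⟨by omega⟩
  have hi : i.val < k := i.isLt
  intro h
  have := congrArg ZMod.val h
  unfold aa bb at this
  split_ifs at this with h1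
  · rw [ZMod.val_zero, ZMod.val_cast_of_lt (by omega : k < 2 * k)] at this
    omega
  · rw [ZMod.val_cast_of_lt (by omega : i.val + 1 < 2 * k),
      ZMod.val_cast_of_lt (by omega : 2 * k - (i.val + 1) < 2 * k)] at this
    omega

lemma fiber_card [NeZero (2 * k)] (hk : 0 < k) (i : Fin k) :
    (Finset.univ.filter (fun d : ZMod (2 * k) => Fidx hk d = i)).card = 2 := by
  have : (Finset.univ.filter (fun d : ZMod (2 * k) => Fidx hk d = i)) = {aa k i, bb k i} := by
    ext d
    simp [mem_fiber hk d i]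
  rw [this, Finset.card_pair (aa_ne_bb hk i)]

lemma row_sum (hk : 0 < k) (i : Fin k) (r : Fin (2 * k)) :
    ∑ c : Fin (2 * k),
      (if Fidx hk (((r : ℕ) : ZMod (2 * k)) - ((c : ℕ) : ZMod (2 * k))) = i then 1 else 0) = 2 := by
  haveI : NeZero (2 * k) := ⟨by omega⟩
  have hbij : Function.Bijective
      (fun c : Fin (2 * k) => ((r : ℕ) : ZMod (2 * k)) - ((c : ℕ) : ZMod (2 * k))) := by
    rw [Fintype.bijective_iff_injective_and_card]
    constructor
    · intro c₁ c₂ h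
      have h2 : ((c₁ : ℕ) : ZMod (2 * k)) = ((c₂ : ℕ) : ZMod (2 * k)) := sub_right_injective h
      have := congrArg ZMod.val h2
      rw [ZMod.val_cast_of_lt c₁.isLt, ZMod.val_cast_of_lt c₂.isLt] at this
      exact Fin.ext this
    · simp [ZMod.card]
  rw [Fintype.sum_bijective _ hbij _ (fun d => if Fidx hk d = i then 1 else 0) (fun c => rfl)]
  simp [Finset.sum_boole, fiber_card hk i]

end AllOnesDecomp

open AllOnesDecomp in
/-- For `n = 2k` even, there exist `k` matrices in `S_n ∩ ℤ^{n×n}` (symmetric nonnegative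
integer matrices with all row and column sums `2`) with pairwise disjoint supports whose
sum is the all-ones matrix. -/
theorem allOnes_decomposition_of_even (n k : ℕ) (hn : n = 2 * k) :
    ∃ M : Fin k → Matrix (Fin n) (Fin n) ℕ,
      (∀ i, (M i).IsSymm ∧ (∀ r, ∑ c, M i r c = 2) ∧ (∀ c, ∑ r, M i r c = 2)) ∧
      (∀ i j, i ≠ j → ∀ r c, M i r c = 0 ∨ M j r c = 0) ∧
      (∑ i, M i) = Matrix.of (fun _ _ => (1 : ℕ)) := by
  subst hn
  rcases Nat.eq_zero_or_pos k with rfl | hk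
  · refine ⟨fun i => i.elim0, fun i => i.elim0, fun i => i.elim0, ?_⟩
    ext r c
    exact absurd r.isLt (by omega)
  · set M : Fin k → Matrix (Fin (2 * k)) (Fin (2 * k)) ℕ := fun i =>
      Matrix.of fun r c =>
        if Fidx hk (((r : ℕ) : ZMod (2 * k)) - ((c : ℕ) : ZMod (2 * k))) = i then 1 else 0
      with hM
    have hsymm : ∀ i (r c : Fin (2 * k)), M i c r = M i r c := by
      intro i r c
      simp only [hM, Matrix.of_apply]
      rw [show ((c : ℕ) : ZMod (2 * k)) - ((r : ℕ) : ZMod (2 * k))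
          = -(((r : ℕ) : ZMod (2 * k)) - ((c : ℕ) : ZMod (2 * k))) by ring, Fidx_neg]
    refine ⟨M, fun i => ⟨?_, fun r => row_sum hk i r, fun c => ?_⟩, ?_, ?_⟩
    · ext r c
      rw [Matrix.transpose_apply]
      exact hsymm i r c
    · calc ∑ r, M i r c = ∑ r, M i c r := Finset.sum_congr rfl fun r _ => (hsymm i r c).symm
        _ = 2 := row_sum hk i c
    · intro i j hij r c
      by_cases h : Fidx hk (((r : ℕ) : ZMod (2 * k)) - ((c : ℕ) : ZMod (2 * k))) = i
      · right
        simp only [hM, Matrix.of_apply]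
        rw [if_neg]
        intro h2
        exact hij (h.symm.trans h2)
      · left
        simp only [hM, Matrix.of_apply]
        rw [if_neg h]
    · ext r c
      simp only [Matrix.sum_apply, hM, Matrix.of_apply, Finset.sum_ite_eq, Finset.mem_univ,
        if_true]
end

section
/- For n odd, n = 2k+1, any interior lattice point of the dilate ((n+1)/2)·S_n equals J + P where J is the all-ones matrix and P is a symmetric permutation matrix; consequently the number of interior lattice points of ((n+1)/2)·S_n equals the number of involutions of {1,…,n}. -/
/-!
Subtracting the all-ones matrix `J` from an interior point leaves a symmetric ℕ-matrix with
row sums `(n + 1) - n = 1`. Each of its rows is then a single standard basis vector `e_{f i}`,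
and symmetry forces `f ∘ f = id`, so it is the permutation matrix of an involution.
Since `σ ↦ J + P_σ` is injective, the count follows.
-/

open Matrix Equiv

lemma Fintype.exists_eq_single_of_sum_eq_one {ι : Type*} [Fintype ι] [DecidableEq ι]
    {g : ι → ℕ} (h : ∑ i, g i = 1) : ∃ j, g = Pi.single j 1 := by
  obtain ⟨j, hj⟩ := (Finsupp.sum_eq_one_iff (Finsupp.equivFunOnFinite.symm g)).1
    (by simpa [Finsupp.sum_fintype] using h)
  exact ⟨j, by simpa using congrArg Finsupp.equivFunOnFinite hj⟩

lemma Nat.card_subtype_eq_of_iff_exists_eq {α β : Type*} {p : α → Prop} {q : β → Prop}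
    (f : β → α) (hf : Function.Injective f) (h : ∀ a, p a ↔ ∃ b, q b ∧ a = f b) :
    Nat.card {a // p a} = Nat.card {b // q b} :=
  Nat.card_congr <| (Equiv.subtypeEquivRight fun a => by simp [h, eq_comm]).trans
    (Equiv.ofInjective (f ∘ Subtype.val) (hf.comp Subtype.val_injective)).symm

lemma Equiv.Perm.permMatrix_injective {ι : Type*} [DecidableEq ι] :
    Function.Injective (fun σ : Perm ι => σ.permMatrix ℕ) := fun σ τ h =>
  Equiv.ext fun i => (by simpa using congrFun (congrFun h i) (σ i) : τ i = σ i).symm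

namespace Matrix

variable {ι : Type*}

lemma exists_eq_allOnes_add_iff_pos {X : Matrix ι ι ℕ} :
    (∃ Y, X = of (fun _ _ => 1) + Y) ↔ ∀ i j, 0 < X i j := by
  refine ⟨?_, fun h => ⟨X - of (fun _ _ => 1), Matrix.ext fun i j => ?_⟩⟩
  · rintro ⟨Y, rfl⟩ i j
    simp
  · simp only [add_apply, sub_apply, of_apply]
    have := h i j
    omega

lemma isSymm_allOnes_add_iff {Y : Matrix ι ι ℕ} :
    (of (fun _ _ => 1) + Y).IsSymm ↔ Y.IsSymm := by
  rw [IsSymm, IsSymm, transpose_add, show (of fun _ _ => 1 : Matrix ι ι ℕ)ᵀ = of fun _ _ => 1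
    from rfl, add_right_inj]

lemma sum_allOnes_add_apply [Fintype ι] (Y : Matrix ι ι ℕ) (i : ι) :
    ∑ j, (of (fun _ _ => 1) + Y : Matrix ι ι ℕ) i j = Fintype.card ι + ∑ j, Y i j := by
  simp [Finset.sum_add_distrib]

variable [Fintype ι] [DecidableEq ι]

lemma isSymm_and_rowSum_eq_one_iff {Y : Matrix ι ι ℕ} :
    (Y.IsSymm ∧ ∀ i, ∑ j, Y i j = 1) ↔ ∃ σ : Perm ι, σ * σ = 1 ∧ Y = σ.permMatrix ℕ := by
  constructor
  · rintro ⟨hsymm, hrow⟩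
    choose f hrowf using fun i => Fintype.exists_eq_single_of_sum_eq_one (hrow i)
    have hY : ∀ i j, Y i j = if f i = j then 1 else 0 := fun i j => by
      simp [hrowf, Pi.single_apply, eq_comm]
    have hinv : Function.Involutive f := fun i => by
      have : Y (f i) i = 1 := by rw [← hsymm.apply, hY, if_pos rfl]
      simpa [hY] using this
    refine ⟨hinv.toPerm f, Equiv.ext hinv, Matrix.ext fun i j => ?_⟩
    simp [hY]
  · rintro ⟨σ, hσ, rfl⟩
    refine ⟨?_, fun i => by simp⟩
    rw [IsSymm, transpose_permMatrix, inv_eq_of_mul_eq_one_right hσ]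

lemma isSymm_and_rowSum_eq_card_add_one_and_pos_iff {X : Matrix ι ι ℕ} :
    (X.IsSymm ∧ (∀ i, ∑ j, X i j = Fintype.card ι + 1) ∧ ∀ i j, 0 < X i j) ↔
      ∃ σ : Perm ι, σ * σ = 1 ∧ X = of (fun _ _ => 1) + σ.permMatrix ℕ := by
  constructor
  · rintro ⟨hsymm, hrow, hpos⟩
    obtain ⟨Y, rfl⟩ := exists_eq_allOnes_add_iff_pos.2 hpos
    have hrowY : ∀ i, ∑ j, Y i j = 1 := fun i => by
      simpa only [sum_allOnes_add_apply, add_right_inj] using hrow i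
    obtain ⟨σ, hσ, rfl⟩ :=
      isSymm_and_rowSum_eq_one_iff.1 ⟨isSymm_allOnes_add_iff.1 hsymm, hrowY⟩
    exact ⟨σ, hσ, rfl⟩
  · rintro ⟨σ, hσ, rfl⟩
    obtain ⟨hsymm, hrow⟩ := isSymm_and_rowSum_eq_one_iff.2 ⟨σ, hσ, rfl⟩
    exact ⟨isSymm_allOnes_add_iff.2 hsymm, fun i => by rw [sum_allOnes_add_apply, hrow],
      exists_eq_allOnes_add_iff_pos.1 ⟨_, rfl⟩⟩

end Matrix

/-- For odd `n = 2k+1`, the interior lattice points of the dilate `((n+1)/2) · S_n`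
(symmetric nonnegative integer matrices with all row sums `n + 1 = 2(k+1)` and all
entries strictly positive) are exactly the matrices `J + P` with `J` the all-ones matrix
and `P` a symmetric permutation matrix; consequently their number equals the number of
involutions of `{1, …, n}`. -/
theorem interior_lattice_points_odd (n k : ℕ) (hn : n = 2 * k + 1) :
    (∀ X : Matrix (Fin n) (Fin n) ℕ,
      (X.IsSymm ∧ (∀ i, ∑ j, X i j = 2 * (k + 1)) ∧ (∀ i j, 0 < X i j)) ↔
      (∃ σ : Equiv.Perm (Fin n), σ * σ = 1 ∧
        X = Matrix.of (fun _ _ => (1 : ℕ)) + σ.permMatrix ℕ)) ∧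
    Nat.card {X : Matrix (Fin n) (Fin n) ℕ //
        X.IsSymm ∧ (∀ i, ∑ j, X i j = 2 * (k + 1)) ∧ (∀ i j, 0 < X i j)} =
      Nat.card {σ : Equiv.Perm (Fin n) // σ * σ = 1} := by
  have hrowSum : 2 * (k + 1) = Fintype.card (Fin n) + 1 := by rw [Fintype.card_fin]; omega
  have hiff := fun X : Matrix (Fin n) (Fin n) ℕ =>
    hrowSum ▸ isSymm_and_rowSum_eq_card_add_one_and_pos_iff (X := X)
  refine ⟨hiff, Nat.card_subtype_eq_of_iff_exists_eq _ ?_ hiff⟩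
  exact (add_right_injective _).comp Perm.permMatrix_injective
end

section
/- For n odd, the minimal dilate of S_n containing an interior lattice point is (n+1)/2; in particular, for m ≤ (n-1)/2 the dilate m·S_n contains no interior lattice points. -/
/-- For odd `n = 2k+1`, the minimal dilate of `S_n` containing an interior lattice point
(a symmetric nonnegative integer matrix with all row sums `2m` and all entries positive)
is `(n+1)/2 = k+1`; in particular no interior lattice point exists for `m ≤ (n-1)/2 = k`. -/
theorem minimal_interior_dilate_odd (n k : ℕ) (hn : n = 2 * k + 1) :
    (∀ m : ℕ, (∃ X : Matrix (Fin n) (Fin n) ℕ,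
        X.IsSymm ∧ (∀ i, ∑ j, X i j = 2 * m) ∧ (∀ i j, 0 < X i j)) → k + 1 ≤ m) ∧
    (∃ X : Matrix (Fin n) (Fin n) ℕ,
        X.IsSymm ∧ (∀ i, ∑ j, X i j = 2 * (k + 1)) ∧ (∀ i j, 0 < X i j)) := by
  constructor
  · rintro m ⟨X, hs, hr, hp⟩
    let i0 : Fin n := ⟨0, by omega⟩
    have h1 : n ≤ ∑ j, X i0 j := by
      calc n = ∑ _j : Fin n, 1 := by simp
        _ ≤ ∑ j, X i0 j := Finset.sum_le_sum fun j _ => hp i0 j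
    rw [hr i0] at h1
    omega
  · refine ⟨fun i j => if i = j then 2 else 1, ?_, ?_, ?_⟩
    · ext i j
      simp [Matrix.transpose, eq_comm]
    · intro i
      have : ∀ j : Fin n, (if i = j then 2 else 1) = 1 + (if i = j then 1 else 0) := by
        intro j; split <;> rfl
      simp only [this, Finset.sum_add_distrib, Finset.sum_const, Finset.sum_ite_eq,
        Finset.mem_univ, if_true, smul_eq_mul, mul_one, Finset.card_univ, Fintype.card_fin]
      omega
    · intro i j
      dsimp only
      split <;> norm_num
end

section
/- For n even, the minimal dilate of S_n containing an interior lattice point is n/2, and the all-ones matrix is an interior lattice point of (n/2)·S_n satisfying x_{ij} = 1 for all i,j. -/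
/-- For even `n = 2k`, the minimal dilate of `S_n` containing an interior lattice point is
`n/2 = k`, and the all-ones matrix is an interior lattice point of `(n/2) · S_n`:
it is symmetric, has all entries equal to `1` (hence positive), and all row sums `2k`. -/
theorem minimal_interior_dilate_even (n k : ℕ) (hn : n = 2 * k) :
    ((Matrix.of (fun _ _ => (1 : ℕ)) : Matrix (Fin n) (Fin n) ℕ).IsSymm ∧
      (∀ i, ∑ j, (Matrix.of (fun _ _ => (1 : ℕ)) : Matrix (Fin n) (Fin n) ℕ) i j = 2 * k) ∧
      (∀ i j, 0 < (Matrix.of (fun _ _ => (1 : ℕ)) : Matrix (Fin n) (Fin n) ℕ) i j)) ∧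
    (∀ m : ℕ, (∃ X : Matrix (Fin n) (Fin n) ℕ,
        X.IsSymm ∧ (∀ i, ∑ j, X i j = 2 * m) ∧ (∀ i j, 0 < X i j)) → k ≤ m) := by
  refine ⟨⟨?_, ?_, ?_⟩, ?_⟩
  · ext i j; simp [Matrix.transpose]
  · intro i; simp [hn]
  · intro i j; simp
  · rintro m ⟨X, -, hsum, hpos⟩
    rcases Nat.eq_zero_or_pos k with hk | hk
    · simp [hk]
    · let i0 : Fin n := ⟨0, by omega⟩
      have h1 : n ≤ ∑ j, X i0 j := by
        calc n = ∑ _j : Fin n, 1 := by simp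
          _ ≤ ∑ j, X i0 j := Finset.sum_le_sum (fun j _ => hpos i0 j)
      rw [hsum i0] at h1
      omega
end

section
/- For every lattice point M of S_n there exists a lattice point N of S_n and lattice points X, Y of S_n with {X, Y} ≠ {M, N} such that M + N = X + Y. -/
/-- A lattice point of `S_n`: a symmetric nonnegative integer matrix with all row and
column sums equal to `2`. -/
def IsLatticePtSn {n : ℕ} (M : Matrix (Fin n) (Fin n) ℕ) : Prop :=
  M.IsSymm ∧ (∀ i, ∑ j, M i j = 2) ∧ (∀ j, ∑ i, M i j = 2)

/-- The diagonal matrix `2 I`. -/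
def Dg (n : ℕ) : Matrix (Fin n) (Fin n) ℕ :=
  Matrix.of fun a b => if a = b then 2 else 0

/-- Double edge between `i` and `j`, loops elsewhere. -/
def D2 (n : ℕ) (i j : Fin n) : Matrix (Fin n) (Fin n) ℕ :=
  Matrix.of fun a b => if (a = i ∧ b = j) ∨ (a = j ∧ b = i) then 2
    else if a = b ∧ ¬(a = i ∨ a = j) then 2 else 0

/-- Single edge between `i` and `j` with half-loops at `i` and `j`, loops elsewhere. -/
def Y0 (n : ℕ) (i j : Fin n) : Matrix (Fin n) (Fin n) ℕ :=
  Matrix.of fun a b => if (a = i ∧ b = j) ∨ (a = j ∧ b = i) then 1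
    else if a = b then (if a = i ∨ a = j then 1 else 2) else 0

/-- `M` with one `{i,j}` edge replaced by half-loops at `i` and `j`. -/
def Xm {n : ℕ} (M : Matrix (Fin n) (Fin n) ℕ) (i j : Fin n) : Matrix (Fin n) (Fin n) ℕ :=
  Matrix.of fun a b => if (a = i ∧ b = j) ∨ (a = j ∧ b = i) then M a b - 1
    else if a = b ∧ (a = i ∨ a = j) then M a b + 1 else M a b

lemma cols_of_rows {n : ℕ} {A : Matrix (Fin n) (Fin n) ℕ} (hs : A.IsSymm)
    (hr : ∀ i, ∑ j, A i j = 2) : ∀ j, ∑ i, A i j = 2 := by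
  intro j
  calc ∑ i, A i j = ∑ i, A j i := Finset.sum_congr rfl fun i _ => hs.apply j i
    _ = 2 := hr j

lemma pair_ne {α : Type*} {X Y M N : α} (h1 : X ≠ M) (h2 : Y ≠ M) :
    ({X, Y} : Multiset α) ≠ {M, N} := by
  intro h
  have hm : M ∈ ({X, Y} : Multiset α) := by rw [h]; simp
  simp only [Multiset.insert_eq_cons, Multiset.mem_cons, Multiset.mem_singleton] at hm
  rcases hm with h' | h'
  · exact h1 h'.symm
  · exact h2 h'.symm

lemma Dg_lattice (n : ℕ) : IsLatticePtSn (Dg n) := by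
  refine ⟨Matrix.IsSymm.ext fun a b => ?_, fun a => ?_, ?_⟩
  · simp only [Dg, Matrix.of_apply]; split_ifs <;> simp_all
  · simp [Dg, Finset.sum_ite_eq]
  · apply cols_of_rows
    · exact Matrix.IsSymm.ext fun a b => by
        simp only [Dg, Matrix.of_apply]; split_ifs <;> simp_all
    · intro a; simp [Dg, Finset.sum_ite_eq]

lemma D2_symm (n : ℕ) (i j : Fin n) : (D2 n i j).IsSymm := by
  refine Matrix.IsSymm.ext fun a b => ?_
  simp only [D2, Matrix.of_apply]
  by_cases e1 : a = i <;> by_cases e2 : a = j <;> by_cases e3 : b = i <;> by_cases e4 : b = j <;> by_cases e5 : a = b <;> simp_all <;> omega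

lemma D2_row (n : ℕ) {i j : Fin n} (hij : i ≠ j) (a : Fin n) : ∑ b, D2 n i j a b = 2 := by
  by_cases hai : a = i
  · have e : ∀ b, D2 n i j a b = if b = j then 2 else 0 := by
      intro b
      simp only [D2, Matrix.of_apply]
      by_cases e1 : a = i <;> by_cases e2 : a = j <;> by_cases e3 : b = i <;> by_cases e4 : b = j <;> by_cases e5 : a = b <;> simp_all <;> omega
    simp [e, Finset.sum_ite_eq, Finset.sum_ite_eq']
  · by_cases haj : a = j
    · have e : ∀ b, D2 n i j a b = if b = i then 2 else 0 := by
        intro b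
        simp only [D2, Matrix.of_apply]
        by_cases e1 : a = i <;> by_cases e2 : a = j <;> by_cases e3 : b = i <;> by_cases e4 : b = j <;> by_cases e5 : a = b <;> simp_all <;> omega
      simp [e, Finset.sum_ite_eq, Finset.sum_ite_eq']
    · have e : ∀ b, D2 n i j a b = if a = b then 2 else 0 := by
        intro b
        simp only [D2, Matrix.of_apply]
        by_cases e1 : a = i <;> by_cases e2 : a = j <;> by_cases e3 : b = i <;> by_cases e4 : b = j <;> by_cases e5 : a = b <;> simp_all <;> omega
      simp [e, Finset.sum_ite_eq, Finset.sum_ite_eq']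
lemma D2_lattice (n : ℕ) {i j : Fin n} (hij : i ≠ j) : IsLatticePtSn (D2 n i j) :=
  ⟨D2_symm n i j, D2_row n hij, cols_of_rows (D2_symm n i j) (D2_row n hij)⟩

lemma Y0_symm (n : ℕ) (i j : Fin n) : (Y0 n i j).IsSymm := by
  refine Matrix.IsSymm.ext fun a b => ?_
  simp only [Y0, Matrix.of_apply]
  by_cases e1 : a = i <;> by_cases e2 : a = j <;> by_cases e3 : b = i <;> by_cases e4 : b = j <;> by_cases e5 : a = b <;> simp_all <;> omega

lemma Y0_row (n : ℕ) {i j : Fin n} (hij : i ≠ j) (a : Fin n) : ∑ b, Y0 n i j a b = 2 := by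
  by_cases hai : a = i
  · have e : ∀ b, Y0 n i j a b = (if b = j then 1 else 0) + (if b = i then 1 else 0) := by
      intro b
      simp only [Y0, Matrix.of_apply]
      by_cases e1 : a = i <;> by_cases e2 : a = j <;> by_cases e3 : b = i <;> by_cases e4 : b = j <;> by_cases e5 : a = b <;> simp_all <;> omega
    simp [e, Finset.sum_add_distrib, Finset.sum_ite_eq']
  · by_cases haj : a = j
    · have e : ∀ b, Y0 n i j a b = (if b = i then 1 else 0) + (if b = j then 1 else 0) := by
        intro b
        simp only [Y0, Matrix.of_apply]
        by_cases e1 : a = i <;> by_cases e2 : a = j <;> by_cases e3 : b = i <;> by_cases e4 : b = j <;> by_cases e5 : a = b <;> simp_all <;> omega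
      simp [e, Finset.sum_add_distrib, Finset.sum_ite_eq']
    · have e : ∀ b, Y0 n i j a b = if a = b then 2 else 0 := by
        intro b
        simp only [Y0, Matrix.of_apply]
        by_cases e1 : a = i <;> by_cases e2 : a = j <;> by_cases e3 : b = i <;> by_cases e4 : b = j <;> by_cases e5 : a = b <;> simp_all <;> omega
      simp [e, Finset.sum_ite_eq, Finset.sum_ite_eq']
lemma Y0_lattice (n : ℕ) {i j : Fin n} (hij : i ≠ j) : IsLatticePtSn (Y0 n i j) :=
  ⟨Y0_symm n i j, Y0_row n hij, cols_of_rows (Y0_symm n i j) (Y0_row n hij)⟩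

lemma Xm_symm {n : ℕ} {M : Matrix (Fin n) (Fin n) ℕ} (hs : M.IsSymm) (i j : Fin n) :
    (Xm M i j).IsSymm := by
  refine Matrix.IsSymm.ext fun a b => ?_
  simp only [Xm, Matrix.of_apply]
  have h := hs.apply a b
  by_cases e1 : a = i <;> by_cases e2 : a = j <;> by_cases e3 : b = i <;> by_cases e4 : b = j <;> by_cases e5 : a = b <;> simp_all <;> omega

lemma Xm_row {n : ℕ} {M : Matrix (Fin n) (Fin n) ℕ} (hs : M.IsSymm)
    (hr : ∀ i, ∑ j, M i j = 2) {i j : Fin n} (hij : i ≠ j) (h1 : 1 ≤ M i j)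
    (a : Fin n) : ∑ b, Xm M i j a b = 2 := by
  have h1' : 1 ≤ M j i := by rw [hs.apply i j]; exact h1
  by_cases hai : a = i
  · have key : ∀ b, Xm M i j a b + (if b = j then 1 else 0)
        = M a b + (if a = b then 1 else 0) := by
      intro b
      simp only [Xm, Matrix.of_apply]
      by_cases e1 : a = i <;> by_cases e2 : a = j <;> by_cases e3 : b = i <;> by_cases e4 : b = j <;> by_cases e5 : a = b <;> simp_all <;> omega
    have hsum : ∑ b, (Xm M i j a b + (if b = j then 1 else 0))
        = ∑ b, (M a b + (if a = b then 1 else 0)) :=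
      Finset.sum_congr rfl fun b _ => key b
    rw [Finset.sum_add_distrib, Finset.sum_add_distrib] at hsum
    simp only [Finset.sum_ite_eq, Finset.sum_ite_eq', Finset.mem_univ, if_true] at hsum
    have := hr a
    omega
  · by_cases haj : a = j
    · have key : ∀ b, Xm M i j a b + (if b = i then 1 else 0)
          = M a b + (if a = b then 1 else 0) := by
        intro b
        simp only [Xm, Matrix.of_apply]
        by_cases e1 : a = i <;> by_cases e2 : a = j <;> by_cases e3 : b = i <;> by_cases e4 : b = j <;> by_cases e5 : a = b <;> simp_all <;> omega
      have hsum : ∑ b, (Xm M i j a b + (if b = i then 1 else 0))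
          = ∑ b, (M a b + (if a = b then 1 else 0)) :=
        Finset.sum_congr rfl fun b _ => key b
      rw [Finset.sum_add_distrib, Finset.sum_add_distrib] at hsum
      simp only [Finset.sum_ite_eq, Finset.sum_ite_eq', Finset.mem_univ, if_true] at hsum
      have := hr a
      omega
    · have e : ∀ b, Xm M i j a b = M a b := by
        intro b
        simp only [Xm, Matrix.of_apply]
        by_cases e1 : a = i <;> by_cases e2 : a = j <;> by_cases e3 : b = i <;> by_cases e4 : b = j <;> by_cases e5 : a = b <;> simp_all <;> omega
      rw [Finset.sum_congr rfl fun b _ => e b]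
      exact hr a

/-- Every lattice point `M` of `S_n` (with `n ≥ 2`) participates in a nontrivial degree-two
relation: there exist lattice points `N`, `X`, `Y` of `S_n` with `M + N = X + Y` and the
multiset `{X, Y}` different from the multiset `{M, N}`. -/
theorem degree_two_relation (n : ℕ) (hn : 2 ≤ n) (M : Matrix (Fin n) (Fin n) ℕ)
    (hM : IsLatticePtSn M) :
    ∃ N X Y : Matrix (Fin n) (Fin n) ℕ,
      IsLatticePtSn N ∧ IsLatticePtSn X ∧ IsLatticePtSn Y ∧
      M + N = X + Y ∧ ({X, Y} : Multiset (Matrix (Fin n) (Fin n) ℕ)) ≠ {M, N} := by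
  obtain ⟨hs, hr, hc⟩ := hM
  by_cases hdiag : ∀ a b : Fin n, a ≠ b → M a b = 0
  · -- M is diagonal, hence M = 2 I
    have i0 : Fin n := ⟨0, by omega⟩
    set i : Fin n := ⟨0, by omega⟩ with hi
    set j : Fin n := ⟨1, by omega⟩ with hj
    have hij : i ≠ j := by simp [hi, hj, Fin.ext_iff]
    have hMD : M = Dg n := by
      ext a b
      by_cases hab : a = b
      · subst hab
        have h2 := hr a
        rw [Finset.sum_eq_single a (fun b _ hb => hdiag a b (Ne.symm hb))
          (fun h => absurd (Finset.mem_univ a) h)] at h2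
        simp [Dg, h2]
      · simp [Dg, hab, hdiag a b hab]
    refine ⟨D2 n i j, Y0 n i j, Y0 n i j, D2_lattice n hij, Y0_lattice n hij,
      Y0_lattice n hij, ?_, ?_⟩
    · ext a b
      rw [hMD]
      simp only [Matrix.add_apply, Dg, D2, Y0, Matrix.of_apply]
      by_cases e1 : a = i <;> by_cases e2 : a = j <;> by_cases e3 : b = i <;> by_cases e4 : b = j <;> by_cases e5 : a = b <;> simp_all <;> omega
    · have hne : Y0 n i j ≠ M := by
        intro h
        have := congrFun (congrFun h i) j
        rw [hMD] at this
        simp [Y0, Dg, hij, Ne.symm hij] at this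
      exact pair_ne hne hne
  · push_neg at hdiag
    obtain ⟨i, j, hij, hMij⟩ := hdiag
    have h1 : 1 ≤ M i j := Nat.one_le_iff_ne_zero.mpr hMij
    have h1' : 1 ≤ M j i := by rw [hs.apply i j]; exact h1
    by_cases hMY : M = Y0 n i j
    · -- special case: M is the path matrix; use N = M, X = D2, Y = Dg
      refine ⟨M, D2 n i j, Dg n, ⟨hs, hr, hc⟩, D2_lattice n hij, Dg_lattice n, ?_, ?_⟩
      · ext a b
        rw [hMY]
        simp only [Matrix.add_apply, Dg, D2, Y0, Matrix.of_apply]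
        by_cases e1 : a = i <;> by_cases e2 : a = j <;> by_cases e3 : b = i <;> by_cases e4 : b = j <;> by_cases e5 : a = b <;> simp_all <;> omega
      · refine pair_ne (fun h => ?_) (fun h => ?_)
        · have := congrFun (congrFun h i) j
          rw [hMY] at this
          simp [D2, Y0, hij, Ne.symm hij] at this
        · have := congrFun (congrFun h i) j
          rw [hMY] at this
          simp [Dg, Y0, hij, Ne.symm hij] at this
    · -- generic case: exchange the edge {i,j} of M against two loops of 2I
      refine ⟨Dg n, Xm M i j, Y0 n i j, Dg_lattice n,
        ⟨Xm_symm hs i j, Xm_row hs hr hij h1,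
          cols_of_rows (Xm_symm hs i j) (Xm_row hs hr hij h1)⟩,
        Y0_lattice n hij, ?_, ?_⟩
      · ext a b
        simp only [Matrix.add_apply, Dg, Xm, Y0, Matrix.of_apply]
        by_cases e1 : a = i <;> by_cases e2 : a = j <;> by_cases e3 : b = i <;> by_cases e4 : b = j <;> by_cases e5 : a = b <;> simp_all <;> omega
      · refine pair_ne (fun h => ?_) (fun h => hMY h.symm)
        have := congrFun (congrFun h i) j
        simp [Xm, hij, Ne.symm hij] at this
        omega
end

section
/- If X is a symmetric nonnegative integer n×n matrix with all row sums 2m whose diagonal entries are all even, then the multigraph on n vertices with adjacency matrix X (a diagonal entry 2c counting c loops, each loop contributing 2 to the degree) is 2m-regular and decomposes into m 2-factors; consequently X = X_1 + ⋯ + X_m with each X_k a symmetric nonnegative integer matrix with row sums 2. -/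
/-!
Petersen's argument. Following Euler tours, orient the edges of the `2m`-regular multigraph `X`
so that every vertex has in- and out-degree `m` (loops are split evenly): `X = B + Bᵀ` with `B`
having all row and column sums `m`. Read as a bipartite multigraph, `B` is `m`-regular, so by
Hall's theorem it is a sum of `m` permutation matrices `P_k`, and each `P_k + P_kᵀ` is a 2-factor.
-/

open Finset Matrix

def IsTwoFactorMatrix {ι : Type*} [Fintype ι] (Y : Matrix ι ι ℕ) : Prop :=
  Y.IsSymm ∧ (∀ i, ∑ j, Y i j = 2) ∧ ∀ i, Even (Y i i)

variable {ι : Type*} [DecidableEq ι]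

def edgeMatrix (u v : ι) : Matrix ι ι ℕ :=
  single u v 1 + (single u v 1)ᵀ

lemma edgeMatrix_isSymm (u v : ι) : (edgeMatrix u v).IsSymm :=
  isSymm_add_transpose_self _

lemma edgeMatrix_apply_self {u v : ι} (huv : u ≠ v) (i : ι) : edgeMatrix u v i i = 0 := by
  simp only [edgeMatrix, Matrix.add_apply, transpose_apply, single_apply]
  split_ifs <;> grind

lemma exists_eq_add_edgeMatrix {X : Matrix ι ι ℕ} (hX : X.IsSymm) {u v : ι} (huv : u ≠ v)
    (hpos : 0 < X u v) : ∃ X' : Matrix ι ι ℕ, X = X' + edgeMatrix u v := by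
  refine ⟨X - edgeMatrix u v, ?_⟩
  ext p q
  have hvu : X v u = X u v := hX.apply u v
  simp only [Matrix.add_apply, Matrix.sub_apply, edgeMatrix, transpose_apply, single_apply]
  split_ifs <;> grind

variable [Fintype ι]

lemma sum_row_single (u v i : ι) : ∑ k, single u v (1 : ℕ) i k = if i = u then 1 else 0 := by
  simp [single_apply, ite_and, eq_comm]

lemma sum_col_single (u v i : ι) : ∑ k, single u v (1 : ℕ) k i = if i = v then 1 else 0 := by
  simp [single_apply, ite_and, eq_comm]

lemma sum_edgeMatrix_apply (u v i : ι) :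
    ∑ k, edgeMatrix u v i k = (if i = u then 1 else 0) + (if i = v then 1 else 0) := by
  simp only [edgeMatrix, Matrix.add_apply, transpose_apply, sum_add_distrib, sum_row_single,
    sum_col_single]

/-- `B` directs the edges of `X` (`B i j` of them as `i → j`) so that in- and out-degrees agree
except for one surplus out-edge at `s` and one surplus in-edge at `t`, as for an Euler trail
from `s` to `t`. -/
def IsTrailOrientation (X B : Matrix ι ι ℕ) (s t : ι) : Prop :=
  B + Bᵀ = X ∧
    ∀ i, ∑ k, B i k + (if i = t then 1 else 0) = ∑ k, B k i + (if i = s then 1 else 0)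

lemma isTrailOrientation_self_iff {X B : Matrix ι ι ℕ} {s : ι} :
    IsTrailOrientation X B s s ↔ B + Bᵀ = X ∧ ∀ i, ∑ k, B i k = ∑ k, B k i := by
  simp only [IsTrailOrientation, add_left_inj]

lemma IsTrailOrientation.add_single {X B : Matrix ι ι ℕ} {s j t : ι}
    (hB : IsTrailOrientation X B j t) :
    IsTrailOrientation (X + edgeMatrix s j) (B + single s j 1) s t := by
  refine ⟨?_, fun i => ?_⟩
  · rw [← hB.1, edgeMatrix, transpose_add]
    abel
  · have := hB.2 i
    simp only [Matrix.add_apply, sum_add_distrib, sum_row_single, sum_col_single]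
    omega

lemma sum_sum_add_edgeMatrix (X : Matrix ι ι ℕ) (u v : ι) :
    ∑ i, ∑ k, (X + edgeMatrix u v) i k = ∑ i, ∑ k, X i k + 2 := by
  simp only [Matrix.add_apply, sum_add_distrib, sum_edgeMatrix_apply]
  simp only [sum_ite_eq', mem_univ, if_true]

lemma isTrailOrientation_diagonal {X : Matrix ι ι ℕ} (hdiag : ∀ i, Even (X i i))
    (hoff : ∀ u v, u ≠ v → X u v = 0) (s : ι) :
    IsTrailOrientation X (diagonal fun i => X i i / 2) s s := by
  refine isTrailOrientation_self_iff.2 ⟨?_, fun i => ?_⟩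
  · ext u v
    rcases eq_or_ne u v with rfl | huv
    · simpa [← two_mul] using Nat.two_mul_div_two_of_even (hdiag u)
    · simp [huv, hoff u v huv]
  · conv_rhs => rw [← diagonal_transpose]
    rfl

theorem exists_isTrailOrientation {X : Matrix ι ι ℕ} (hX : X.IsSymm) (hdiag : ∀ i, Even (X i i))
    {s t : ι} (hpar : ∀ i, Even (∑ k, X i k + (if i = s then 1 else 0) + (if i = t then 1 else 0))) :
    ∃ B, IsTrailOrientation X B s t := by
  induction hN : ∑ i, ∑ k, X i k using Nat.strong_induction_on generalizing X s t with
  | _ N ih =>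
  have prepend : ∀ {u v w : ι}, u ≠ v → 0 < X u v →
      (∀ i, Even (∑ k, X i k + (if i = u then 1 else 0) + (if i = w then 1 else 0))) →
      ∃ B, IsTrailOrientation X B u w := by
    intro u v w huv hpos hpar'
    obtain ⟨X', rfl⟩ := exists_eq_add_edgeMatrix hX huv hpos
    have hX' : X'.IsSymm := by
      have h := hX.eq
      rwa [transpose_add, (edgeMatrix_isSymm u v).eq, add_left_inj] at h
    obtain ⟨B', hB'⟩ := ih _ (by rw [← hN, sum_sum_add_edgeMatrix]; omega) hX'
      (fun i => by simpa [edgeMatrix_apply_self huv] using hdiag i)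
      (s := v) (t := w) (fun i => by
        have h := hpar' i
        simp only [Matrix.add_apply, sum_add_distrib, sum_edgeMatrix_apply, Nat.even_iff] at h ⊢
        omega) rfl
    exact ⟨_, hB'.add_single⟩
  rcases eq_or_ne s t with rfl | hst
  · by_cases hedge : ∃ u v, u ≠ v ∧ 0 < X u v
    · obtain ⟨u, v, huv, hpos⟩ := hedge
      obtain ⟨B, hB⟩ := prepend (w := u) huv hpos (fun i => by
        have h := hpar i
        simp only [Nat.even_iff] at h ⊢
        omega)
      -- a closed trail may be started anywhere
      exact ⟨B, isTrailOrientation_self_iff.2 (isTrailOrientation_self_iff.1 hB)⟩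
    · push Not at hedge
      exact ⟨_, isTrailOrientation_diagonal hdiag (fun u v huv => Nat.le_zero.1 (hedge u v huv)) s⟩
  · obtain ⟨j, hsj, hpos⟩ : ∃ j, s ≠ j ∧ 0 < X s j := by
      by_contra! hno
      have hrow : ∑ k, X s k = X s s :=
        sum_eq_single s (fun k _ hks => Nat.le_zero.1 (hno k (Ne.symm hks))) (by simp)
      have h := hpar s
      rw [hrow, if_pos rfl, if_neg hst] at h
      exact Nat.not_even_iff_odd.2 ((hdiag s).add_one) h
    exact prepend hsj hpos hpar

theorem exists_orientation_of_sum_eq_two_mul {X : Matrix ι ι ℕ} (hX : X.IsSymm)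
    (hdiag : ∀ i, Even (X i i)) {m : ℕ} (hrow : ∀ i, ∑ k, X i k = 2 * m) :
    ∃ B, B + Bᵀ = X ∧ (∀ i, ∑ k, B i k = m) ∧ ∀ i, ∑ k, B k i = m := by
  rcases isEmpty_or_nonempty ι with hι | ⟨⟨s⟩⟩
  · exact ⟨0, Subsingleton.elim _ _, isEmptyElim, isEmptyElim⟩
  obtain ⟨B, hB⟩ := exists_isTrailOrientation hX hdiag (s := s) (t := s) fun i => by
    simp only [hrow, Nat.even_iff]
    omega
  obtain ⟨hBX, hbal⟩ := isTrailOrientation_self_iff.1 hB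
  have hdeg i : ∑ k, B i k + ∑ k, B k i = 2 * m := by
    rw [← hrow i, ← hBX]
    simp only [Matrix.add_apply, transpose_apply, sum_add_distrib]
  exact ⟨B, hBX, fun i => by linarith [hdeg i, hbal i], fun i => by linarith [hdeg i, hbal i]⟩

lemma exists_perm_forall_pos {B : Matrix ι ι ℕ} {m : ℕ} (hm : 0 < m)
    (hrow : ∀ i, ∑ j, B i j = m) (hcol : ∀ j, ∑ i, B i j = m) :
    ∃ σ : Equiv.Perm ι, ∀ i, 0 < B i (σ i) := by
  let nbhd (i : ι) : Finset ι := {j | 0 < B i j}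
  have hall (A : Finset ι) : #A ≤ #(A.biUnion nbhd) := by
    refine Nat.le_of_mul_le_mul_right ?_ hm
    calc #A * m = ∑ i ∈ A, ∑ j, B i j := by simp [hrow]
      _ = ∑ i ∈ A, ∑ j ∈ A.biUnion nbhd, B i j := by
        refine sum_congr rfl fun i hi => (sum_subset (subset_univ _) fun j _ hj => ?_).symm
        by_contra hB
        exact hj (mem_biUnion.2 ⟨i, hi, by simp [nbhd, Nat.pos_of_ne_zero hB]⟩)
      _ ≤ ∑ j ∈ A.biUnion nbhd, ∑ i, B i j :=
        sum_comm.trans_le (sum_le_sum fun j _ => sum_le_sum_of_subset (subset_univ A))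
      _ = #(A.biUnion nbhd) * m := by simp [hcol]
  obtain ⟨f, hinj, hf⟩ := (all_card_le_biUnion_card_iff_exists_injective nbhd).1 hall
  exact ⟨Equiv.ofBijective f (Finite.injective_iff_bijective.1 hinj), fun i => by
    simpa [nbhd] using hf i⟩

lemma sum_row_permMatrix (σ : Equiv.Perm ι) (i : ι) : ∑ j, σ.permMatrix ℕ i j = 1 :=
  sum_row_of_mem_doublyStochastic permMatrix_mem_doublyStochastic i

lemma sum_col_permMatrix (σ : Equiv.Perm ι) (j : ι) : ∑ i, σ.permMatrix ℕ i j = 1 :=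
  sum_col_of_mem_doublyStochastic permMatrix_mem_doublyStochastic j

theorem exists_eq_sum_permMatrix {m : ℕ} {B : Matrix ι ι ℕ}
    (hrow : ∀ i, ∑ j, B i j = m) (hcol : ∀ j, ∑ i, B i j = m) :
    ∃ σ : Fin m → Equiv.Perm ι, B = ∑ k, (σ k).permMatrix ℕ := by
  induction m generalizing B with
  | zero =>
    refine ⟨finZeroElim, ?_⟩
    ext i j
    simpa using sum_eq_zero_iff.1 (hrow i) j (mem_univ j)
  | succ m ih =>
    obtain ⟨σ, hσ⟩ := exists_perm_forall_pos m.succ_pos hrow hcol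
    have hB : B = (B - σ.permMatrix ℕ) + σ.permMatrix ℕ := by
      ext i j
      have := hσ i
      simp only [Matrix.add_apply, Matrix.sub_apply, Equiv.Perm.permMatrix, PEquiv.toMatrix_apply,
        Equiv.toPEquiv_apply, Option.mem_def, Option.some.injEq]
      split_ifs <;> grind
    obtain ⟨τ, hτ⟩ := ih (B := B - σ.permMatrix ℕ)
      (fun i => by
        have := hrow i
        rw [hB] at this
        simp only [Matrix.add_apply, sum_add_distrib, sum_row_permMatrix] at this
        omega)
      (fun j => by
        have := hcol j
        rw [hB] at this
        simp only [Matrix.add_apply, sum_add_distrib, sum_col_permMatrix] at this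
        omega)
    refine ⟨Fin.cons σ τ, ?_⟩
    rw [Fin.sum_univ_succ, Fin.cons_zero]
    simp only [Fin.cons_succ]
    rw [← hτ, add_comm]
    exact hB

lemma isTwoFactorMatrix_permMatrix_add_transpose (σ : Equiv.Perm ι) :
    IsTwoFactorMatrix (σ.permMatrix ℕ + (σ.permMatrix ℕ)ᵀ) :=
  ⟨isSymm_add_transpose_self _, fun i => by
    simp only [Matrix.add_apply, transpose_apply, sum_add_distrib, sum_row_permMatrix,
      sum_col_permMatrix],
   fun i => by simpa only [Matrix.add_apply, transpose_apply] using Even.add_self _⟩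

/-- The even-diagonal case of integral closure of `S_n`, via Petersen's 2-factor theorem:
a symmetric nonnegative integer matrix `X` with all row sums `2m` whose diagonal entries
are all even (so the corresponding multigraph, with a diagonal entry `2c` counting `c`
loops of degree `2`, is `2m`-regular) decomposes as `X = X_1 + ⋯ + X_m` where each `X_k`
is a symmetric nonnegative integer matrix with all row sums `2` and even diagonal
entries (a 2-factor). -/
theorem even_diagonal_two_factorization (n m : ℕ) (X : Matrix (Fin n) (Fin n) ℕ)
    (hsymm : X.IsSymm) (hrow : ∀ i, ∑ j, X i j = 2 * m)
    (hdiag : ∀ i, Even (X i i)) :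
    ∃ Y : Fin m → Matrix (Fin n) (Fin n) ℕ,
      (∀ k, (Y k).IsSymm ∧ (∀ i, ∑ j, Y k i j = 2) ∧ (∀ i, Even (Y k i i))) ∧
      X = ∑ k, Y k := by
  obtain ⟨B, hBX, hBrow, hBcol⟩ := exists_orientation_of_sum_eq_two_mul hsymm hdiag hrow
  obtain ⟨σ, rfl⟩ := exists_eq_sum_permMatrix hBrow hBcol
  refine ⟨fun k => (σ k).permMatrix ℕ + ((σ k).permMatrix ℕ)ᵀ,
    fun k => isTwoFactorMatrix_permMatrix_add_transpose (σ k), ?_⟩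
  rw [← hBX, transpose_sum, sum_add_distrib]
end
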